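/- Let G be a graph with independence number at most t and let H be a maximal ℤ₃-connected subgraph of G with |V(H)| ≥ t + 1. Then G − V(H) has independence number at most t − 1. -/

import Mathlib

/-- A finite loopless multigraph: each edge has an ordered pair of distinct endpoints
(the ordering is immaterial; it is only used to describe orientations). -/
structure Multigraph : Type 1 where
  V : Type
  fintypeV : Fintype V
  decEqV : DecidableEq V
  E : Type
  fintypeE : Fintype E
  decEqE : DecidableEq E
  ends : E → V × V
  loopless : ∀ e, (ends e).1 ≠ (ends e).2

attribute [instance] Multigraph.fintypeV Multigraph.decEqV Multigraph.fintypeE Multigraph.decEqE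

namespace Multigraph

variable (G : Multigraph)

/-- Tail of an edge under an orientation `D` (`true` = directed from first to second end). -/
def tail (D : G.E → Bool) (e : G.E) : G.V := if D e then (G.ends e).1 else (G.ends e).2

/-- Head of an edge under an orientation `D`. -/
def head (D : G.E → Bool) (e : G.E) : G.V := if D e then (G.ends e).2 else (G.ends e).1

/-- Out-degree of `v` under orientation `D`. -/
def outDeg (D : G.E → Bool) (v : G.V) : ℕ := (Finset.univ.filter fun e => G.tail D e = v).card

/-- In-degree of `v` under orientation `D`. -/
def inDeg (D : G.E → Bool) (v : G.V) : ℕ := (Finset.univ.filter fun e => G.head D e = v).card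

/-- A modulo 3-orientation. -/
def HasMod3Orientation : Prop :=
  ∃ D : G.E → Bool, ∀ v : G.V, ((G.outDeg D v : ZMod 3) = (G.inDeg D v : ZMod 3))

/-- A nowhere-zero 3-flow. -/
def HasNowhereZero3Flow : Prop :=
  ∃ (D : G.E → Bool) (f : G.E → ℤ),
    (∀ e, 1 ≤ |f e| ∧ |f e| ≤ 2) ∧
    (∀ v : G.V,
      (∑ e : G.E, if G.tail D e = v then f e else 0) =
      (∑ e : G.E, if G.head D e = v then f e else 0))

/-- `ℤ₃`-connectivity. -/
def Z3Connected : Prop :=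
  ∀ b : G.V → ZMod 3, (∑ v : G.V, b v) = 0 →
    ∃ D : G.E → Bool, ∀ v : G.V, (G.outDeg D v : ZMod 3) - (G.inDeg D v : ZMod 3) = b v

/-- Degree of a vertex. -/
def degree (v : G.V) : ℕ :=
  (Finset.univ.filter fun e => (G.ends e).1 = v ∨ (G.ends e).2 = v).card

/-- Minimum degree `δ(G)`. -/
noncomputable def minDegree : ℕ := sInf (Set.range G.degree)

/-- The edge cut `∂_G(S)`. -/
def cut (S : Finset G.V) : Finset G.E :=
  Finset.univ.filter fun e =>
    ((G.ends e).1 ∈ S ∧ (G.ends e).2 ∉ S) ∨ ((G.ends e).2 ∈ S ∧ (G.ends e).1 ∉ S)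

def Adjacent (u v : G.V) : Prop :=
  ∃ e : G.E, G.ends e = (u, v) ∨ G.ends e = (v, u)

def IsIndepSet (S : Finset G.V) : Prop :=
  ∀ u ∈ S, ∀ v ∈ S, u ≠ v → ¬ G.Adjacent u v

/-- The independence number `α(G)`. -/
noncomputable def indepNum : ℕ := sSup {n : ℕ | ∃ S : Finset G.V, G.IsIndepSet S ∧ S.card = n}

def FiveEdgeConnected : Prop :=
  ∀ S : Finset G.V, S.Nonempty → S ≠ Finset.univ → 5 ≤ (G.cut S).card

/-- Every odd edge cut has at least 5 edges. -/
def Odd5EdgeConnected : Prop :=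
  ∀ S : Finset G.V, Odd (G.cut S).card → 5 ≤ (G.cut S).card

/-- `G` contains `K₄` as a subgraph. -/
def ContainsK4 : Prop :=
  ∃ a b c d : G.V, a ≠ b ∧ a ≠ c ∧ a ≠ d ∧ b ≠ c ∧ b ≠ d ∧ c ≠ d ∧
    G.Adjacent a b ∧ G.Adjacent a c ∧ G.Adjacent a d ∧
    G.Adjacent b c ∧ G.Adjacent b d ∧ G.Adjacent c d

/-- The neighbourhood `N(X)`: vertices outside `X` with a neighbour in `X`. -/
noncomputable def neighborFinset (X : Finset G.V) : Finset G.V := by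
  classical
  exact Finset.univ.filter fun y => y ∉ X ∧ ∃ x ∈ X, G.Adjacent x y

/-- Induced subgraph on a vertex set `S`. -/
def induce (S : Finset G.V) : Multigraph where
  V := {v // v ∈ S}
  fintypeV := inferInstance
  decEqV := inferInstance
  E := {e : G.E // (G.ends e).1 ∈ S ∧ (G.ends e).2 ∈ S}
  fintypeE := inferInstance
  decEqE := inferInstance
  ends := fun e => (⟨(G.ends e.1).1, e.2.1⟩, ⟨(G.ends e.1).2, e.2.2⟩)
  loopless := fun e h => G.loopless e.1 (congrArg Subtype.val h)

/-- The relation identifying the two ends of each edge in `F`. -/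
def contractRel (F : Set G.E) (x y : G.V) : Prop :=
  ∃ e ∈ F, G.ends e = (x, y) ∨ G.ends e = (y, x)

/-- Contraction of a set `F` of edges: identify endpoints of edges of `F`
(via the equivalence closure), delete the edges of `F` and all resulting loops. -/
noncomputable def contractEdges (F : Set G.E) : Multigraph := by
  classical
  exact
    { V := Quot (G.contractRel F)
      fintypeV := Fintype.ofSurjective (Quot.mk _) (fun q => Quot.inductionOn q fun a => ⟨a, rfl⟩)
      decEqV := Classical.decEq _
      E := {e : G.E // e ∉ F ∧
            Quot.mk (G.contractRel F) (G.ends e).1 ≠ Quot.mk (G.contractRel F) (G.ends e).2}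
      fintypeE := Subtype.fintype _
      decEqE := Classical.decEq _
      ends := fun e => (Quot.mk _ (G.ends e.1).1, Quot.mk _ (G.ends e.1).2)
      loopless := fun e => e.2.2 }

end Multigraph

/-- A subgraph of a multigraph. -/
structure Multigraph.Subgraph (G : Multigraph) where
  verts : Finset G.V
  edges : Finset G.E
  ends_mem : ∀ e ∈ edges, (G.ends e).1 ∈ verts ∧ (G.ends e).2 ∈ verts

namespace Multigraph

/-- A subgraph as a multigraph in its own right. -/
def Subgraph.toMultigraph {G : Multigraph} (H : G.Subgraph) : Multigraph where
  V := {v // v ∈ H.verts}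
  fintypeV := inferInstance
  decEqV := inferInstance
  E := {e // e ∈ H.edges}
  fintypeE := inferInstance
  decEqE := inferInstance
  ends := fun e => (⟨(G.ends e.1).1, (H.ends_mem e.1 e.2).1⟩, ⟨(G.ends e.1).2, (H.ends_mem e.1 e.2).2⟩)
  loopless := fun e h => G.loopless e.1 (congrArg Subtype.val h)

/-- `G` is `⟨ℤ₃⟩`-reduced: it has no `ℤ₃`-connected subgraph with at least two vertices. -/
def Z3Reduced (G : Multigraph) : Prop :=
  ∀ H : G.Subgraph, H.toMultigraph.Z3Connected → H.verts.card ≤ 1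

/-- The contraction `G/H` of a subgraph. -/
noncomputable def contractSubgraph (G : Multigraph) (H : G.Subgraph) : Multigraph :=
  G.contractEdges {e | e ∈ H.edges}

/-- The `⟨ℤ₃⟩`-reduction of `G`: contract (the edges of) all maximal `ℤ₃`-connected
subgraphs of `G`. -/
noncomputable def reduction (G : Multigraph) : Multigraph :=
  G.contractEdges {e | ∃ H : G.Subgraph, H.toMultigraph.Z3Connected ∧ e ∈ H.edges}

end Multigraph

/-- `r(n)`: the maximum number of edges of a `⟨ℤ₃⟩`-reduced graph on `n` vertices. -/
noncomputable def edgeMaxReduced (n : ℕ) : ℕ :=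
  sSup {m : ℕ | ∃ G : Multigraph, G.Z3Reduced ∧ Fintype.card G.V = n ∧ Fintype.card G.E = m}

/-- The complete graph `K_n`. -/
def completeK (n : ℕ) : Multigraph where
  V := Fin n
  fintypeV := inferInstance
  decEqV := inferInstance
  E := {p : Fin n × Fin n // p.1 < p.2}
  fintypeE := inferInstance
  decEqE := inferInstance
  ends := fun p => p.1
  loopless := fun p => Fin.ne_of_lt p.2

private theorem fin_succ_ne {n : ℕ} (hn : 2 ≤ n) (i : Fin n)
    (hv : (i : ℕ) = ((i : ℕ) + 1) % n) : False := by
  have hi := i.isLt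
  by_cases hlt : (i : ℕ) + 1 < n
  · rw [Nat.mod_eq_of_lt hlt] at hv; omega
  · have he : (i : ℕ) + 1 = n := by omega
    rw [he, Nat.mod_self] at hv; omega

/-- The cycle `C_n` (for `n ≥ 2`); `C_2` is a digon. -/
def cycleGraph (n : ℕ) (hn : 2 ≤ n) : Multigraph where
  V := Fin n
  fintypeV := inferInstance
  decEqV := inferInstance
  E := Fin n
  fintypeE := inferInstance
  decEqE := inferInstance
  ends := fun i => (i, ⟨((i : ℕ) + 1) % n, Nat.mod_lt _ (by omega)⟩)
  loopless := fun i h => fin_succ_ne hn i (congrArg Fin.val h)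

/-- The wheel `W_n` (for `n ≥ 2`): an `n`-cycle on `some 0, …, some (n-1)` together
with a center `none` joined to every vertex of the cycle. -/
def wheelGraph (n : ℕ) (hn : 2 ≤ n) : Multigraph where
  V := Option (Fin n)
  fintypeV := inferInstance
  decEqV := inferInstance
  E := Fin n ⊕ Fin n
  fintypeE := inferInstance
  decEqE := inferInstance
  ends := fun e => match e with
    | .inl i => (some i, some ⟨((i : ℕ) + 1) % n, Nat.mod_lt _ (by omega)⟩)
    | .inr i => (none, some i)
  loopless := by
    rintro (i | i) h
    · exact fin_succ_ne hn i (congrArg Fin.val (Option.some_injective _ h))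
    · exact absurd (show (none : Option (Fin n)) = some i from h) (by simp)

/-!
A vertex `v` outside a `ℤ₃`-connected graph `H` joined to it by two edges can be added to `H`
without losing `ℤ₃`-connectivity: orient the two edges to produce the prescribed boundary at `v`,
then orient `H` for the corrected boundary, which still sums to zero. Hence, when `H` is maximal,
every vertex outside `H` has at most one neighbour in `H`. An independent set of size `t` in
`G - V(H)` then sees at most `t` vertices of `H`, and any further vertex of `H` extends it to an
independent set of size `t + 1` in `G`.
-/

namespace Multigraph

variable (G : Multigraph)

def incidence (D : G.E → Bool) (e : G.E) (u : G.V) : ZMod 3 :=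
  (if G.tail D e = u then 1 else 0) - (if G.head D e = u then 1 else 0)

variable {G}

theorem outDeg_sub_inDeg (D : G.E → Bool) (u : G.V) :
    (G.outDeg D u : ZMod 3) - G.inDeg D u = ∑ e, G.incidence D e u := by
  simp only [outDeg, inDeg, incidence, Finset.card_filter, Finset.sum_sub_distrib, Nat.cast_sum,
    Nat.cast_ite, Nat.cast_one, Nat.cast_zero]

theorem incidence_eq_zero {D : G.E → Bool} {e : G.E} {u : G.V} (h₁ : (G.ends e).1 ≠ u)
    (h₂ : (G.ends e).2 ≠ u) : G.incidence D e u = 0 := by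
  cases hD : D e <;> simp [incidence, tail, head, hD, h₁, h₂]

theorem incidence_congr {D D' : G.E → Bool} {e : G.E} (h : D e = D' e) (u : G.V) :
    G.incidence D e u = G.incidence D' e u := by
  unfold incidence tail head
  rw [h]

theorem sum_incidence_eq_zero (D : G.E → Bool) {e : G.E} {S : Finset G.V}
    (h₁ : (G.ends e).1 ∈ S) (h₂ : (G.ends e).2 ∈ S) : ∑ u ∈ S, G.incidence D e u = 0 := by
  cases hD : D e <;> simp [incidence, tail, head, hD, h₁, h₂, Finset.sum_sub_distrib]

theorem incidence_of_ends_eq {D : G.E → Bool} {e : G.E} {v x : G.V}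
    (h : G.ends e = (v, x) ∨ G.ends e = (x, v)) :
    G.incidence D e v = if D e = decide ((G.ends e).1 = v) then 1 else -1 := by
  have hvx : v ≠ x := fun hvx => G.loopless e (by rcases h with h | h <;> simp [h, hvx])
  rcases h with h | h <;> cases hD : D e <;> simp [incidence, tail, head, h, hD, hvx.symm]

/-- Both edges out, one each way, or both in give `2`, `0` or `-2`, which cover `ZMod 3`. -/
theorem exists_incidence_add_incidence_eq {v x₁ x₂ : G.V} {e₁ e₂ : G.E} (hne : e₁ ≠ e₂)
    (h₁ : G.ends e₁ = (v, x₁) ∨ G.ends e₁ = (x₁, v))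
    (h₂ : G.ends e₂ = (v, x₂) ∨ G.ends e₂ = (x₂, v)) (c : ZMod 3) :
    ∃ D : G.E → Bool, G.incidence D e₁ v + G.incidence D e₂ v = c := by
  simp only [incidence_of_ends_eq h₁, incidence_of_ends_eq h₂]
  obtain rfl | rfl | rfl : c = 0 ∨ c = 1 ∨ c = 2 := by revert c; decide
  · exact ⟨fun e => if e = e₁ then decide ((G.ends e).1 = v) else !decide ((G.ends e).1 = v),
      by simp [hne.symm]⟩
  · exact ⟨fun e => !decide ((G.ends e).1 = v), by simp; decide⟩
  · exact ⟨fun e => decide ((G.ends e).1 = v), by simp; decide⟩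

theorem ends_mem_insert {e : G.E} {v x : G.V} {V : Finset G.V}
    (h : G.ends e = (v, x) ∨ G.ends e = (x, v)) (hx : x ∈ V) :
    (G.ends e).1 ∈ insert v V ∧ (G.ends e).2 ∈ insert v V := by
  rcases h with h | h <;> simp [h, hx]

variable (G) in
/-- `ℤ₃`-connectivity of the graph `(V, E)`, phrased with orientations and boundaries on all of
`G`; only their restrictions to `E` and `V` matter. -/
def Z3ConnectedOn (V : Finset G.V) (E : Finset G.E) : Prop :=
  ∀ b : G.V → ZMod 3, ∑ u ∈ V, b u = 0 →
    ∃ D : G.E → Bool, ∀ u ∈ V, ∑ e ∈ E, G.incidence D e u = b u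

theorem Z3ConnectedOn.insert_digon {V : Finset G.V} {E : Finset G.E} (hVE : G.Z3ConnectedOn V E)
    (hE : ∀ e ∈ E, (G.ends e).1 ∈ V ∧ (G.ends e).2 ∈ V) {v x₁ x₂ : G.V} (hv : v ∉ V)
    (hx₁ : x₁ ∈ V) (hx₂ : x₂ ∈ V) {e₁ e₂ : G.E} (hne : e₁ ≠ e₂)
    (h₁ : G.ends e₁ = (v, x₁) ∨ G.ends e₁ = (x₁, v))
    (h₂ : G.ends e₂ = (v, x₂) ∨ G.ends e₂ = (x₂, v)) :
    G.Z3ConnectedOn (insert v V) (insert e₁ (insert e₂ E)) := by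
  have hnotMem : ∀ {e x}, G.ends e = (v, x) ∨ G.ends e = (x, v) → e ∉ E := by
    rintro e x (h | h) he <;> simpa [h, hv] using hE e he
  have hE₁ := hnotMem h₁
  have hE₂ := hnotMem h₂
  intro b hb
  obtain ⟨D₀, hD₀⟩ := G.exists_incidence_add_incidence_eq hne h₁ h₂ (b v)
  set c : G.V → ZMod 3 := fun u => b u - G.incidence D₀ e₁ u - G.incidence D₀ e₂ u
  have hc : ∑ u ∈ V, c u = 0 := by
    have htotal : ∑ u ∈ insert v V, c u = 0 := by
      obtain ⟨h₁₁, h₁₂⟩ := ends_mem_insert h₁ hx₁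
      obtain ⟨h₂₁, h₂₂⟩ := ends_mem_insert h₂ hx₂
      simp only [c, Finset.sum_sub_distrib, hb, sum_incidence_eq_zero D₀ h₁₁ h₁₂,
        sum_incidence_eq_zero D₀ h₂₁ h₂₂, sub_zero]
    have hcv : c v = 0 := by simp only [c, ← hD₀, sub_sub, sub_self]
    rwa [Finset.sum_insert hv, hcv, zero_add] at htotal
  obtain ⟨D, hD⟩ := hVE c hc
  refine ⟨E.piecewise D D₀, fun u hu => ?_⟩
  have hsplit : ∑ e ∈ insert e₁ (insert e₂ E), G.incidence (E.piecewise D D₀) e u =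
      G.incidence D₀ e₁ u + G.incidence D₀ e₂ u + ∑ e ∈ E, G.incidence D e u := by
    rw [Finset.sum_insert (by simp [hne, hE₁]), Finset.sum_insert hE₂, add_assoc,
      incidence_congr (Finset.piecewise_eq_of_notMem _ _ _ hE₁),
      incidence_congr (Finset.piecewise_eq_of_notMem _ _ _ hE₂),
      Finset.sum_congr rfl fun e he => incidence_congr (Finset.piecewise_eq_of_mem _ _ _ he) u]
  rw [hsplit]
  rcases Finset.mem_insert.1 hu with rfl | hu
  · have hzero : ∀ e ∈ E, G.incidence D e u = 0 := fun e he =>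
      incidence_eq_zero ((hE e he).1.ne_of_notMem hv) ((hE e he).2.ne_of_notMem hv)
    rw [Finset.sum_eq_zero hzero, add_zero, hD₀]
  · rw [hD u hu]
    ring

theorem adjacent_comm {u v : G.V} : G.Adjacent u v ↔ G.Adjacent v u :=
  ⟨fun ⟨e, he⟩ => ⟨e, he.symm⟩, fun ⟨e, he⟩ => ⟨e, he.symm⟩⟩

theorem adjacent_induce_iff {X : Finset G.V} {u v : (G.induce X).V} :
    (G.induce X).Adjacent u v ↔ G.Adjacent u.1 v.1 := by
  have hval : ∀ (a : G.V) (ha : a ∈ X) (w : (G.induce X).V),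
      (⟨a, ha⟩ : (G.induce X).V) = w ↔ a = w.1 := fun _ _ _ => Subtype.ext_iff
  constructor
  · rintro ⟨e, he⟩
    exact ⟨e.1, by simpa [induce, Prod.ext_iff, hval] using he⟩
  · rintro ⟨e, he⟩
    have hX : (G.ends e).1 ∈ X ∧ (G.ends e).2 ∈ X := by
      rcases he with he | he <;> rw [he]
      exacts [⟨u.2, v.2⟩, ⟨v.2, u.2⟩]
    exact ⟨⟨e, hX⟩, by simpa [induce, Prod.ext_iff, hval] using he⟩

theorem IsIndepSet.mono {S T : Finset G.V} (hS : G.IsIndepSet S) (hTS : T ⊆ S) :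
    G.IsIndepSet T :=
  fun u hu v hv => hS u (hTS hu) v (hTS hv)

theorem IsIndepSet.insert {S : Finset G.V} {w : G.V} (hS : G.IsIndepSet S)
    (hw : ∀ u ∈ S, ¬ G.Adjacent u w) : G.IsIndepSet (insert w S) := by
  intro a ha b hb hab
  rcases Finset.mem_insert.1 ha with rfl | haS <;> rcases Finset.mem_insert.1 hb with rfl | hbS
  · exact absurd rfl hab
  · exact fun h => hw b hbS (adjacent_comm.1 h)
  · exact hw a haS
  · exact hS a haS b hbS hab

theorem IsIndepSet.map_induce {X : Finset G.V} {S : Finset (G.induce X).V}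
    (hS : (G.induce X).IsIndepSet S) :
    G.IsIndepSet (S.map (Function.Embedding.subtype (· ∈ X))) := by
  intro a ha b hb hab
  obtain ⟨u, hu, rfl⟩ := Finset.mem_map.1 ha
  obtain ⟨v, hv, rfl⟩ := Finset.mem_map.1 hb
  exact fun h => hS u hu v hv (ne_of_apply_ne _ hab) (adjacent_induce_iff.2 h)

theorem IsIndepSet.card_le_indepNum {S : Finset G.V} (hS : G.IsIndepSet S) :
    S.card ≤ G.indepNum :=
  le_csSup ⟨Fintype.card G.V, by rintro _ ⟨T, -, rfl⟩; exact T.card_le_univ⟩ ⟨S, hS, rfl⟩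

theorem indepNum_le_of_forall {n : ℕ} (h : ∀ S, G.IsIndepSet S → S.card ≤ n) :
    G.indepNum ≤ n :=
  csSup_le ⟨0, ∅, by simp [IsIndepSet], rfl⟩ (by rintro _ ⟨S, hS, rfl⟩; exact h S hS)

theorem exists_isIndepSet_card_succ {X T : Finset G.V}
    (hX : ∀ v ∉ X, ∀ x ∈ X, ∀ y ∈ X, G.Adjacent v x → G.Adjacent v y → x = y)
    (hT : G.IsIndepSet T) (hTX : Disjoint T X) (hcard : T.card < X.card) :
    ∃ S, G.IsIndepSet S ∧ S.card = T.card + 1 := by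
  classical
  set N := T.biUnion fun u => X.filter (G.Adjacent u)
  have hN : N.card ≤ T.card := by
    simpa using Finset.card_biUnion_le_card_mul T _ 1 fun u hu => Finset.card_le_one.2
      fun x hx y hy => hX u (Finset.disjoint_left.1 hTX hu) x (Finset.mem_filter.1 hx).1 y
        (Finset.mem_filter.1 hy).1 (Finset.mem_filter.1 hx).2 (Finset.mem_filter.1 hy).2
  obtain ⟨w, hwX, hwN⟩ := Finset.exists_mem_notMem_of_card_lt_card (hN.trans_lt hcard)
  have hwT : w ∉ T := fun hw => Finset.disjoint_left.1 hTX hw hwX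
  refine ⟨insert w T, hT.insert fun u hu huw => hwN ?_, Finset.card_insert_of_notMem hwT⟩
  exact Finset.mem_biUnion.2 ⟨u, hu, Finset.mem_filter.2 ⟨hwX, huw⟩⟩

namespace Subgraph

variable {H : G.Subgraph}

theorem incidence_toMultigraph (D : G.E → Bool) (e : H.toMultigraph.E) (u : H.toMultigraph.V) :
    H.toMultigraph.incidence (fun e => D e.1) e u = G.incidence D e.1 u.1 := by
  have hval : ∀ (a : G.V) (ha : a ∈ H.verts), (⟨a, ha⟩ : H.toMultigraph.V) = u ↔ a = u.1 :=
    fun _ _ => Subtype.ext_iff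
  cases hD : D e.1 <;> simp [incidence, tail, head, toMultigraph, hD, hval]

theorem outDeg_sub_inDeg (D : G.E → Bool) (u : H.toMultigraph.V) :
    (H.toMultigraph.outDeg (fun e => D e.1) u : ZMod 3) -
        H.toMultigraph.inDeg (fun e => D e.1) u = ∑ e ∈ H.edges, G.incidence D e u.1 := by
  rw [Multigraph.outDeg_sub_inDeg, ← Finset.sum_coe_sort H.edges]
  exact Finset.sum_congr rfl fun e _ => incidence_toMultigraph D e u

theorem z3Connected_iff : H.toMultigraph.Z3Connected ↔ G.Z3ConnectedOn H.verts H.edges := by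
  constructor
  · intro hH b hb
    obtain ⟨D, hD⟩ := hH (fun u => b u.1) ((Finset.sum_coe_sort H.verts b).trans hb)
    set D' : G.E → Bool := fun e => if h : e ∈ H.edges then D ⟨e, h⟩ else false
    have hD' : (fun e : H.toMultigraph.E => D' e.1) = D := funext fun e => dif_pos e.2
    refine ⟨D', fun u hu => ?_⟩
    rw [← hD ⟨u, hu⟩, ← hD']
    exact (outDeg_sub_inDeg D' ⟨u, hu⟩).symm
  · intro hH b hb
    obtain ⟨D, hD⟩ := hH (fun u => if h : u ∈ H.verts then b ⟨u, h⟩ else 0) (by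
      rw [← Finset.sum_coe_sort]
      exact (Fintype.sum_congr _ _ fun u => dif_pos u.2).trans hb)
    refine ⟨fun e => D e.1, fun u => ?_⟩
    rw [outDeg_sub_inDeg, hD u.1 u.2, dif_pos u.2]
    rfl

theorem exists_z3Connected_extension_of_two_edges (hH : H.toMultigraph.Z3Connected)
    {v x₁ x₂ : G.V} (hv : v ∉ H.verts) (hx₁ : x₁ ∈ H.verts) (hx₂ : x₂ ∈ H.verts)
    {e₁ e₂ : G.E} (hne : e₁ ≠ e₂)
    (h₁ : G.ends e₁ = (v, x₁) ∨ G.ends e₁ = (x₁, v))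
    (h₂ : G.ends e₂ = (v, x₂) ∨ G.ends e₂ = (x₂, v)) :
    ∃ H' : G.Subgraph, H'.toMultigraph.Z3Connected ∧ H.verts ⊆ H'.verts ∧
      H.edges ⊆ H'.edges ∧ v ∈ H'.verts := by
  let H' : G.Subgraph :=
    { verts := insert v H.verts
      edges := insert e₁ (insert e₂ H.edges)
      ends_mem := by
        simp only [Finset.forall_mem_insert]
        exact ⟨ends_mem_insert h₁ hx₁, ends_mem_insert h₂ hx₂, fun e he =>
          (H.ends_mem e he).imp (Finset.mem_insert_of_mem ·) (Finset.mem_insert_of_mem ·)⟩ }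
  refine ⟨H', ?_, Finset.subset_insert _ _,
    fun e he => Finset.mem_insert_of_mem (Finset.mem_insert_of_mem he), Finset.mem_insert_self _ _⟩
  rw [z3Connected_iff] at hH ⊢
  exact hH.insert_digon H.ends_mem hv hx₁ hx₂ hne h₁ h₂

theorem eq_of_adjacent_of_maximal (hH : H.toMultigraph.Z3Connected)
    (hmax : ∀ H' : G.Subgraph, H'.toMultigraph.Z3Connected →
      H.verts ⊆ H'.verts → H.edges ⊆ H'.edges → H' = H)
    {v x y : G.V} (hv : v ∉ H.verts) (hx : x ∈ H.verts) (hy : y ∈ H.verts)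
    (hvx : G.Adjacent v x) (hvy : G.Adjacent v y) : x = y := by
  obtain ⟨e₁, h₁⟩ := hvx
  obtain ⟨e₂, h₂⟩ := hvy
  by_cases hne : e₁ = e₂
  · subst hne
    have hvx : v ≠ x := fun h => hv (h ▸ hx)
    have hvy : v ≠ y := fun h => hv (h ▸ hy)
    rcases h₁ with h₁ | h₁ <;> rcases h₂ with h₂ | h₂ <;> simp_all
  · obtain ⟨H', hH', hV, hE, hvH'⟩ :=
      exists_z3Connected_extension_of_two_edges hH hv hx hy hne h₁ h₂
    exact absurd (hmax H' hH' hV hE ▸ hvH') hv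

end Subgraph

end Multigraph

/-- If `α(G) ≤ t` and `H` is a maximal `ℤ₃`-connected subgraph of `G` with
`|V(H)| ≥ t + 1`, then `α(G − V(H)) ≤ t − 1`. -/
theorem indepNum_delete_maximal_z3 (G : Multigraph) (t : ℕ) (ht : G.indepNum ≤ t)
    (H : G.Subgraph) (hZ3 : H.toMultigraph.Z3Connected)
    (hmax : ∀ H' : G.Subgraph, H'.toMultigraph.Z3Connected →
      H.verts ⊆ H'.verts → H.edges ⊆ H'.edges → H' = H)
    (hcard : t + 1 ≤ H.verts.card) :
    (G.induce H.vertsᶜ).indepNum ≤ t - 1 := by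
  refine Multigraph.indepNum_le_of_forall fun S hS => ?_
  by_contra! hlt
  set S' := S.map (Function.Embedding.subtype (· ∈ H.vertsᶜ))
  have hS'card : S'.card = S.card := Finset.card_map _
  have hS'H : Disjoint S' H.verts := Finset.disjoint_left.2 fun u hu => by
    obtain ⟨a, -, rfl⟩ := Finset.mem_map.1 hu
    exact Finset.mem_compl.1 a.2
  obtain ⟨T, hTS', hTcard⟩ :=
    Finset.exists_subset_card_eq (s := S') (n := t) (by rw [hS'card]; omega)
  obtain ⟨U, hU, hUcard⟩ := G.exists_isIndepSet_card_succ
    (fun v hv x hx y hy => H.eq_of_adjacent_of_maximal hZ3 hmax hv hx hy)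
    (hS.map_induce.mono hTS') (hS'H.mono_left hTS') (by omega)
  have := hU.card_le_indepNum
  omega
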